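/- Let k ≥ 2 be an integer, c > 0, and suppose ψ is real-valued and of class C^k on (a, b), with |ψ^{(k)}(x)| ≥ c for all x ∈ (a, b). Let h be of class C¹ on (a, b), continuous on (a, b] with derivative h' integrable on (a, b). Then for every real λ ≠ 0 one has |∫_a^b e^{i λ ψ(x)} h(x) dx| ≤ (5·2^{k−1} − 2) c^{−1/k} [ |h(b)| + ∫_a^b |h'(x)| dx ] |λ|^{−1/k}. -/

import Mathlib

/-!
This is van der Corput's argument. On a compact subinterval `[u, v]` of `(a, b)`, the case of
one derivative with `ψ'` monotone follows by integrating `e^{iλψ} = (1/ψ') (e^{iλψ}/(iλ))'` by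
parts: the two boundary terms and the total variation of `1/ψ'` (which keeps its sign) are each
at most `1/c`, giving `3 (c|λ|)⁻¹`. For `k ≥ 2`, `ψ^{(k-1)}` is monotone with
`|ψ^{(k-1)}(x)| ≥ c |x - x₀|` for a suitable `x₀`; outside `(x₀ - δ, x₀ + δ)` the bound of
order `k - 1` applies with `c δ` in place of `c`, the middle piece contributes at most `2δ`, and
`δ = (c|λ|)^{-1/k}` turns the constants `C_{k-1}` into `C_k = 2 C_{k-1} + 2 = 5·2^{k-1} - 2`.

The amplitude enters by integrating by parts against the primitive `∫_u^x e^{iλψ}`, which vanishes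
at `u` and is bounded by the previous estimate; the fundamental theorem of calculus bounds
`|h(v)| + ∫_u^v |h'|` by `|h(b)| + ∫_a^b |h'|`, and exhausting `(a, b)` by compact subintervals
gives the theorem.
-/

open Set MeasureTheory Filter Topology intervalIntegral Complex

section Calculus

variable {f f' : ℝ → ℝ} {u v c : ℝ}

theorem forall_le_or_forall_le_neg_of_le_abs_deriv {s : Set ℝ} (hs : Convex ℝ s) (hc : 0 < c)
    (hf : ∀ x ∈ s, HasDerivAt f (f' x) x) (hlow : ∀ x ∈ s, c ≤ |f' x|) :
    (∀ x ∈ s, c ≤ f' x) ∨ ∀ x ∈ s, f' x ≤ -c := by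
  rcases hasDerivWithinAt_forall_lt_or_forall_gt_of_forall_ne hs
    (fun x hx => (hf x hx).hasDerivWithinAt) fun x hx => abs_pos.1 (hc.trans_le (hlow x hx))
    with hneg | hpos
  · exact Or.inr fun x hx => by linarith [abs_of_neg (hneg x hx) ▸ hlow x hx]
  · exact Or.inl fun x hx => abs_of_pos (hpos x hx) ▸ hlow x hx

theorem mul_sub_le_sub_of_le_deriv (hf : ∀ x ∈ Icc u v, HasDerivAt f (f' x) x)
    (hf' : ∀ x ∈ Icc u v, c ≤ f' x) {x y : ℝ} (hx : x ∈ Icc u v) (hy : y ∈ Icc u v)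
    (hxy : x ≤ y) : c * (y - x) ≤ f y - f x :=
  (convex_Icc u v).mul_sub_le_image_sub_of_le_deriv
    (fun t ht => (hf t ht).continuousAt.continuousWithinAt)
    (fun t ht => (hf t (interior_subset ht)).differentiableAt.differentiableWithinAt)
    (fun t ht => (hf t (interior_subset ht)).deriv ▸ hf' t (interior_subset ht)) x hx y hy hxy

/-- `x₀` is the zero of `f` in `[u, v]` or, if there is none, the endpoint where `|f|` is
smallest. -/
theorem exists_mul_abs_sub_le_abs_of_le_deriv (huv : u ≤ v)
    (hf : ∀ x ∈ Icc u v, HasDerivAt f (f' x) x) (hf' : ∀ x ∈ Icc u v, c ≤ f' x) :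
    ∃ x₀ ∈ Icc u v, ∀ x ∈ Icc u v, c * |x - x₀| ≤ |f x| := by
  suffices ∃ x₀ ∈ Icc u v, (u < x₀ → f x₀ ≤ 0) ∧ (x₀ < v → 0 ≤ f x₀) by
    obtain ⟨x₀, hx₀, hleft, hright⟩ := this
    refine ⟨x₀, hx₀, fun x hx => ?_⟩
    rcases lt_trichotomy x x₀ with hlt | rfl | hgt
    · have := mul_sub_le_sub_of_le_deriv hf hf' hx hx₀ hlt.le
      rw [abs_of_neg (sub_neg.2 hlt)]
      linarith [hleft (hx.1.trans_lt hlt), neg_le_abs (f x)]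
    · simp
    · have := mul_sub_le_sub_of_le_deriv hf hf' hx₀ hx hgt.le
      rw [abs_of_pos (sub_pos.2 hgt)]
      linarith [hright (hgt.trans_le hx.2), le_abs_self (f x)]
  have hu : u ∈ Icc u v := left_mem_Icc.2 huv
  have hv : v ∈ Icc u v := right_mem_Icc.2 huv
  by_cases hfu : 0 ≤ f u
  · exact ⟨u, hu, fun h => absurd h (lt_irrefl u), fun _ => hfu⟩
  by_cases hfv : f v ≤ 0
  · exact ⟨v, hv, fun _ => hfv, fun h => absurd h (lt_irrefl v)⟩
  obtain ⟨z, hz, hfz⟩ := intermediate_value_Icc huv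
    (fun x hx => (hf x hx).continuousAt.continuousWithinAt) ⟨(not_le.1 hfu).le, (not_le.1 hfv).le⟩
  exact ⟨z, hz, fun _ => hfz.le, fun _ => hfz.ge⟩

theorem exists_mul_abs_sub_le_abs_of_le_abs_deriv (hc : 0 < c) (huv : u ≤ v)
    (hf : ∀ x ∈ Icc u v, HasDerivAt f (f' x) x) (hlow : ∀ x ∈ Icc u v, c ≤ |f' x|) :
    ∃ x₀ ∈ Icc u v, ∀ x ∈ Icc u v, c * |x - x₀| ≤ |f x| := by
  rcases forall_le_or_forall_le_neg_of_le_abs_deriv (convex_Icc u v) hc hf hlow with hpos | hneg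
  · exact exists_mul_abs_sub_le_abs_of_le_deriv huv hf hpos
  · simpa only [abs_neg] using exists_mul_abs_sub_le_abs_of_le_deriv (f := fun x => -f x) huv
      (fun x hx => (hf x hx).neg) (fun x hx => le_neg.1 (hneg x hx))

theorem integral_abs_deriv_eq_abs_sub_of_nonneg {g g' : ℝ → ℝ} (huv : u ≤ v)
    (hg : ∀ x ∈ Icc u v, HasDerivAt g (g' x) x) (hg' : ∀ x ∈ Icc u v, 0 ≤ g' x) :
    IntervalIntegrable g' volume u v ∧ ∫ x in u..v, |g' x| = |g v - g u| := by
  rw [← uIcc_of_le huv] at hg hg'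
  have hint : IntervalIntegrable g' volume u v :=
    intervalIntegrable_deriv_of_nonneg (fun x hx => (hg x hx).continuousAt.continuousWithinAt)
      (fun x hx => hg x (Ioo_subset_Icc_self hx)) (fun x hx => hg' x (Ioo_subset_Icc_self hx))
  have hftc : ∫ x in u..v, |g' x| = g v - g u := by
    rw [integral_congr fun x hx => abs_of_nonneg (hg' x hx)]
    exact integral_eq_sub_of_hasDerivAt hg hint
  refine ⟨hint, hftc.trans (abs_of_nonneg ?_).symm⟩
  exact hftc ▸ intervalIntegral.integral_nonneg huv fun x _ => abs_nonneg _

theorem integral_abs_deriv_eq_abs_sub {g g' : ℝ → ℝ} (huv : u ≤ v)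
    (hg : ∀ x ∈ Icc u v, HasDerivAt g (g' x) x)
    (hsign : (∀ x ∈ Icc u v, 0 ≤ g' x) ∨ ∀ x ∈ Icc u v, g' x ≤ 0) :
    IntervalIntegrable g' volume u v ∧ ∫ x in u..v, |g' x| = |g v - g u| := by
  rcases hsign with hpos | hneg
  · exact integral_abs_deriv_eq_abs_sub_of_nonneg huv hg hpos
  · obtain ⟨hint, heq⟩ := integral_abs_deriv_eq_abs_sub_of_nonneg (g := fun x => -g x) huv
      (fun x hx => (hg x hx).neg) (fun x hx => neg_nonneg.2 (hneg x hx))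
    refine ⟨by simpa only [Pi.neg_def, neg_neg] using hint.neg, ?_⟩
    simpa only [abs_neg, neg_sub_neg, abs_sub_comm (g u)] using heq

theorem abs_inv_sub_inv_le_inv {x y : ℝ} (hc : 0 < c)
    (hxy : (c ≤ x ∧ c ≤ y) ∨ (x ≤ -c ∧ y ≤ -c)) : |x⁻¹ - y⁻¹| ≤ c⁻¹ := by
  rcases hxy with ⟨hx, hy⟩ | ⟨hx, hy⟩
  · exact abs_sub_le_of_nonneg_of_le (inv_nonneg.2 (hc.trans_le hx).le) (inv_anti₀ hc hx)
      (inv_nonneg.2 (hc.trans_le hy).le) (inv_anti₀ hc hy)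
  · rw [← abs_neg, neg_sub, ← neg_sub_neg, ← inv_neg, ← inv_neg]
    rw [le_neg] at hx hy
    exact abs_sub_le_of_nonneg_of_le (inv_nonneg.2 (hc.trans_le hx).le) (inv_anti₀ hc hx)
      (inv_nonneg.2 (hc.trans_le hy).le) (inv_anti₀ hc hy)

/-- `1 / g` is monotone and takes values in `(0, 1 / c]` or in `[-1 / c, 0)`. -/
theorem integral_abs_deriv_inv_le {g g' : ℝ → ℝ} (huv : u ≤ v) (hc : 0 < c)
    (hg : ∀ x ∈ Icc u v, HasDerivAt g (g' x) x)
    (hsign : (∀ x ∈ Icc u v, 0 ≤ g' x) ∨ ∀ x ∈ Icc u v, g' x ≤ 0)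
    (hlow : (∀ x ∈ Icc u v, c ≤ g x) ∨ ∀ x ∈ Icc u v, g x ≤ -c) :
    IntervalIntegrable (fun x => -g' x / g x ^ 2) volume u v ∧
      ∫ x in u..v, |-g' x / g x ^ 2| ≤ c⁻¹ := by
  have hne : ∀ x ∈ Icc u v, g x ≠ 0 := fun x hx => by
    rcases hlow with h | h <;> linarith [h x hx]
  have hr_sign : (∀ x ∈ Icc u v, 0 ≤ -g' x / g x ^ 2) ∨ ∀ x ∈ Icc u v, -g' x / g x ^ 2 ≤ 0 :=
    hsign.symm.imp (fun h x hx => div_nonneg (neg_nonneg.2 (h x hx)) (sq_nonneg _))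
      (fun h x hx => div_nonpos_of_nonpos_of_nonneg (neg_nonpos.2 (h x hx)) (sq_nonneg _))
  obtain ⟨hint, heq⟩ :=
    integral_abs_deriv_eq_abs_sub huv (fun x hx => (hg x hx).inv (hne x hx)) hr_sign
  have hu : u ∈ Icc u v := left_mem_Icc.2 huv
  have hv : v ∈ Icc u v := right_mem_Icc.2 huv
  exact ⟨hint, heq ▸ abs_inv_sub_inv_le_inv hc
    (hlow.imp (fun h => ⟨h v hv, h u hu⟩) fun h => ⟨h v hv, h u hu⟩)⟩

theorem hasDerivAt_iteratedDerivWithin {𝕜 F : Type*} [NontriviallyNormedField 𝕜]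
    [NormedAddCommGroup F] [NormedSpace 𝕜 F] {f : 𝕜 → F} {s : Set 𝕜} {k j : ℕ} {x : 𝕜}
    (hs : IsOpen s) (hf : ContDiffOn 𝕜 k f s) (hj : j < k) (hx : x ∈ s) :
    HasDerivAt (iteratedDerivWithin j f s) (iteratedDerivWithin (j + 1) f s x) x := by
  have hdiff := hf.differentiableOn_iteratedDerivWithin (by exact_mod_cast hj) hs.uniqueDiffOn
  rw [iteratedDerivWithin_succ, derivWithin_of_isOpen hs hx]
  exact ((hdiff x hx).differentiableAt (hs.mem_nhds hx)).hasDerivAt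

end Calculus

section PartialIntegration

variable {E : Type*} [NormedAddCommGroup E] [NormedSpace ℝ E] {u v C : ℝ}

theorem norm_integral_smul_deriv_le [CompleteSpace E] {r r' : ℝ → ℝ} {D D' : ℝ → E} (huv : u ≤ v)
    (hr : ContinuousOn r (Icc u v)) (hD : ContinuousOn D (Icc u v))
    (hrr' : ∀ x ∈ Ioo u v, HasDerivAt r (r' x) x) (hDD' : ∀ x ∈ Ioo u v, HasDerivAt D (D' x) x)
    (hr' : IntervalIntegrable r' volume u v) (hD' : IntervalIntegrable D' volume u v)
    (hC : ∀ x ∈ Icc u v, ‖D x‖ ≤ C) :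
    ‖∫ x in u..v, r x • D' x‖ ≤ |r v| * ‖D v‖ + |r u| * ‖D u‖ + C * ∫ x in u..v, |r' x| := by
  rw [← uIcc_of_le huv] at hr hD
  have hrest : ‖∫ x in u..v, r' x • D x‖ ≤ C * ∫ x in u..v, |r' x| := by
    rw [← intervalIntegral.integral_const_mul]
    refine norm_integral_le_of_norm_le huv (ae_of_all _ fun x hx => ?_) (hr'.abs.const_mul C)
    rw [norm_smul, Real.norm_eq_abs, mul_comm]
    exact mul_le_mul_of_nonneg_right (hC x (Ioc_subset_Icc_self hx)) (abs_nonneg _)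
  have hIoo : Ioo (min u v) (max u v) = Ioo u v := by rw [min_eq_left huv, max_eq_right huv]
  rw [← hIoo] at hrr' hDD'
  rw [integral_smul_deriv_eq_deriv_smul_of_hasDerivAt hr hD hrr' hDD' hr' hD']
  calc _ ≤ ‖r v • D v‖ + ‖r u • D u‖ + ‖∫ x in u..v, r' x • D x‖ :=
        norm_sub_le_of_le (norm_sub_le _ _) le_rfl
    _ ≤ _ := by
        rw [norm_smul, norm_smul, Real.norm_eq_abs, Real.norm_eq_abs]
        gcongr

/-- Cutting `[u, v]` at `x₀ ± δ`: the middle piece has length at most `2δ`. -/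
theorem norm_integral_le_of_norm_integral_away_le {F : ℝ → E} {x₀ δ A : ℝ} (huv : u ≤ v)
    (hx₀ : x₀ ∈ Icc u v) (hδ : 0 ≤ δ) (hA : 0 ≤ A) (hF : IntervalIntegrable F volume u v)
    (hF1 : ∀ x, ‖F x‖ ≤ 1)
    (hpieces : ∀ w z, u ≤ w → w ≤ z → z ≤ v → (∀ x ∈ Icc w z, δ ≤ |x - x₀|) →
      ‖∫ x in w..z, F x‖ ≤ A) :
    ‖∫ x in u..v, F x‖ ≤ 2 * A + 2 * δ := by
  set p := max u (x₀ - δ)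
  set q := min v (x₀ + δ)
  have hup : u ≤ p := le_max_left _ _
  have hpq : p ≤ q := by
    simp only [p, q, max_le_iff, le_min_iff]
    refine ⟨⟨huv, ?_⟩, ?_, ?_⟩ <;> linarith [hx₀.1, hx₀.2]
  have hqv : q ≤ v := min_le_left _ _
  have hint : ∀ w z, u ≤ w → w ≤ z → z ≤ v → IntervalIntegrable F volume w z :=
    fun w z hw hwz hz => hF.mono_set (by
      rw [uIcc_of_le hwz, uIcc_of_le huv]
      exact Icc_subset_Icc hw hz)
  have hsplit : ∫ x in u..v, F x = (∫ x in u..p, F x) + (∫ x in p..q, F x) + ∫ x in q..v, F x := by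
    rw [integral_add_adjacent_intervals (hint u p le_rfl hup (hpq.trans hqv))
        (hint p q hup hpq hqv),
      integral_add_adjacent_intervals (hint u q le_rfl (hup.trans hpq) hqv)
        (hint q v (hup.trans hpq) hqv le_rfl)]
  have hleft : ‖∫ x in u..p, F x‖ ≤ A := by
    rcases le_total (x₀ - δ) u with h | h
    · simpa [p, max_eq_left h] using hA
    · refine hpieces u p le_rfl hup (hpq.trans hqv) fun x hx => ?_
      have hp : p = x₀ - δ := max_eq_right h
      rw [abs_sub_comm, abs_of_nonneg] <;> linarith [hx.2]
  have hright : ‖∫ x in q..v, F x‖ ≤ A := by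
    rcases le_total v (x₀ + δ) with h | h
    · simpa [q, min_eq_left h] using hA
    · refine hpieces q v (hup.trans hpq) hqv le_rfl fun x hx => ?_
      have hq : q = x₀ + δ := min_eq_right h
      rw [abs_of_nonneg] <;> linarith [hx.1]
  have hmid : ‖∫ x in p..q, F x‖ ≤ 2 * δ := by
    have := norm_integral_le_of_norm_le_const (a := p) (b := q) fun x _ => hF1 x
    rw [one_mul, abs_of_nonneg (sub_nonneg.2 hpq)] at this
    linarith [min_le_right v (x₀ + δ), le_max_right u (x₀ - δ)]
  rw [hsplit]
  linarith [norm_add₃_le (a := ∫ x in u..p, F x) (b := ∫ x in p..q, F x) (c := ∫ x in q..v, F x)]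

end PartialIntegration

theorem self_mul_rpow_neg_one_div_add_one_rpow {t m : ℝ} (ht : 0 < t) (hm : m ≠ 0)
    (hm1 : m + 1 ≠ 0) :
    (t * t ^ (-(1 / (m + 1)))) ^ (-(1 / m)) = t ^ (-(1 / (m + 1))) := by
  rw [show t * t ^ (-(1 / (m + 1))) = t ^ (1 + -(1 / (m + 1))) by
    rw [Real.rpow_add ht, Real.rpow_one], ← Real.rpow_mul ht.le]
  congr 1
  field_simp
  ring

section VanDerCorput

theorem norm_exp_I_mul_ofReal_mul_ofReal (r s : ℝ) : ‖exp (I * r * s)‖ = 1 := by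
  rw [show I * r * s = ((r * s : ℝ) : ℂ) * I by push_cast; ring]
  exact norm_exp_ofReal_mul_I _

variable {ψ : ℝ → ℝ} {u v c lam : ℝ}

theorem hasDerivAt_inv_I_mul_mul_exp {ψ' x : ℝ} (hlam : lam ≠ 0) (hψ : HasDerivAt ψ ψ' x) :
    HasDerivAt (fun y => (I * lam)⁻¹ * exp (I * lam * ψ y)) (ψ' * exp (I * lam * ψ x)) x := by
  have hlam' : (lam : ℂ) ≠ 0 := ofReal_ne_zero.2 hlam
  refine (((hψ.ofReal_comp.const_mul (I * lam)).cexp).const_mul (I * lam)⁻¹).congr_deriv ?_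
  field_simp

theorem van_der_corput_first_deriv {ψ' ψ'' : ℝ → ℝ} (huv : u ≤ v) (hc : 0 < c) (hlam : lam ≠ 0)
    (hψ : ∀ x ∈ Icc u v, HasDerivAt ψ (ψ' x) x) (hψ' : ∀ x ∈ Icc u v, HasDerivAt ψ' (ψ'' x) x)
    (hsign : (∀ x ∈ Icc u v, 0 ≤ ψ'' x) ∨ ∀ x ∈ Icc u v, ψ'' x ≤ 0)
    (hlow : ∀ x ∈ Icc u v, c ≤ |ψ' x|) :
    ‖∫ x in u..v, exp (I * lam * ψ x)‖ ≤ 3 * (c * |lam|)⁻¹ := by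
  have hne : ∀ x ∈ Icc u v, ψ' x ≠ 0 := fun x hx => abs_pos.1 (hc.trans_le (hlow x hx))
  have hr : ∀ x ∈ Icc u v, HasDerivAt (fun y => (ψ' y)⁻¹) (-ψ'' x / ψ' x ^ 2) x :=
    fun x hx => (hψ' x hx).inv (hne x hx)
  obtain ⟨hr'int, hr'abs⟩ := integral_abs_deriv_inv_le huv hc hψ' hsign
    (forall_le_or_forall_le_neg_of_le_abs_deriv (convex_Icc u v) hc hψ hlow)
  have hr_le : ∀ x ∈ Icc u v, |(ψ' x)⁻¹| ≤ c⁻¹ := fun x hx =>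
    abs_inv (ψ' x) ▸ inv_anti₀ hc (hlow x hx)
  have hD : ∀ x ∈ Icc u v, HasDerivAt (fun y => (I * lam)⁻¹ * exp (I * lam * ψ y))
      (ψ' x * exp (I * lam * ψ x)) x := fun x hx => hasDerivAt_inv_I_mul_mul_exp hlam (hψ x hx)
  have hD_norm : ∀ x, ‖(I * lam)⁻¹ * exp (I * lam * ψ x)‖ = |lam|⁻¹ := fun x => by
    simp [norm_exp_I_mul_ofReal_mul_ofReal]
  have hψ'cont : ContinuousOn ψ' (Icc u v) := fun x hx => (hψ' x hx).continuousAt.continuousWithinAt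
  have hψcont : ContinuousOn ψ (Icc u v) := fun x hx => (hψ x hx).continuousAt.continuousWithinAt
  have hD'int : IntervalIntegrable (fun x => (ψ' x : ℂ) * exp (I * lam * ψ x)) volume u v :=
    ContinuousOn.intervalIntegrable_of_Icc huv (by fun_prop)
  have hcongr : ∫ x in u..v, exp (I * lam * ψ x) =
      ∫ x in u..v, (ψ' x)⁻¹ • ((ψ' x : ℂ) * exp (I * lam * ψ x)) := by
    refine integral_congr fun x hx => ?_
    rw [uIcc_of_le huv] at hx
    rw [real_smul, ofReal_inv, inv_mul_cancel_left₀ (ofReal_ne_zero.2 (hne x hx))]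
  rw [hcongr]
  calc _ ≤ |(ψ' v)⁻¹| * |lam|⁻¹ + |(ψ' u)⁻¹| * |lam|⁻¹ +
        |lam|⁻¹ * ∫ x in u..v, |-ψ'' x / ψ' x ^ 2| := by
        simpa only [hD_norm] using norm_integral_smul_deriv_le huv
          (fun x hx => (hr x hx).continuousAt.continuousWithinAt)
          (fun x hx => (hD x hx).continuousAt.continuousWithinAt)
          (fun x hx => hr x (Ioo_subset_Icc_self hx)) (fun x hx => hD x (Ioo_subset_Icc_self hx))
          hr'int hD'int (fun x _ => (hD_norm x).le)
    _ ≤ c⁻¹ * |lam|⁻¹ + c⁻¹ * |lam|⁻¹ + |lam|⁻¹ * c⁻¹ := by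
        gcongr
        exacts [hr_le v (right_mem_Icc.2 huv), hr_le u (left_mem_Icc.2 huv)]
    _ = 3 * (c * |lam|)⁻¹ := by rw [mul_inv]; ring

theorem van_der_corput_step {f f' : ℝ → ℝ} {m : ℕ} (hm : m ≠ 0) {C : ℝ} (hC : 0 ≤ C)
    (huv : u ≤ v) (hc : 0 < c) (hlam : lam ≠ 0) (hψ : ContinuousOn ψ (Icc u v))
    (hf : ∀ x ∈ Icc u v, HasDerivAt f (f' x) x) (hlow : ∀ x ∈ Icc u v, c ≤ |f' x|)
    (hpieces : ∀ w z, u ≤ w → w ≤ z → z ≤ v → ∀ c' > 0, (∀ x ∈ Icc w z, c' ≤ |f x|) →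
      ‖∫ x in w..z, exp (I * lam * ψ x)‖ ≤ C * (c' * |lam|) ^ (-(1 / (m : ℝ)))) :
    ‖∫ x in u..v, exp (I * lam * ψ x)‖ ≤ (2 * C + 2) * (c * |lam|) ^ (-(1 / (m + 1 : ℝ))) := by
  set t := c * |lam|
  have ht : 0 < t := mul_pos hc (abs_pos.2 hlam)
  -- chosen so that the order-`m` bound with `c' = c δ` on the outer pieces equals `C δ`
  set δ := t ^ (-(1 / (m + 1 : ℝ)))
  have hδ : 0 < δ := Real.rpow_pos_of_pos ht _
  obtain ⟨x₀, hx₀, hx₀f⟩ := exists_mul_abs_sub_le_abs_of_le_abs_deriv hc huv hf hlow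
  have hE : ContinuousOn (fun x => exp (I * lam * ψ x)) (Icc u v) := by fun_prop
  have := norm_integral_le_of_norm_integral_away_le huv hx₀ hδ.le (mul_nonneg hC hδ.le)
    (hE.intervalIntegrable_of_Icc huv) (fun x => (norm_exp_I_mul_ofReal_mul_ofReal lam (ψ x)).le)
    fun w z hw hwz hz hfar => by
      have hpiece := hpieces w z hw hwz hz (c * δ) (mul_pos hc hδ) fun x hx =>
        (mul_le_mul_of_nonneg_left (hfar x hx) hc.le).trans (hx₀f x (Icc_subset_Icc hw hz hx))
      rwa [mul_right_comm, self_mul_rpow_neg_one_div_add_one_rpow ht (Nat.cast_ne_zero.2 hm)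
        (by positivity)] at hpiece
  linarith

theorem van_der_corput_Icc {φ : ℕ → ℝ → ℝ} {k : ℕ} (hk : 2 ≤ k) (huv : u ≤ v) (hc : 0 < c)
    (hlam : lam ≠ 0) (hφ : ∀ j < k, ∀ x ∈ Icc u v, HasDerivAt (φ j) (φ (j + 1) x) x)
    (hlow : ∀ x ∈ Icc u v, c ≤ |φ k x|) :
    ‖∫ x in u..v, exp (I * lam * φ 0 x)‖ ≤
      (5 * 2 ^ (k - 1) - 2) * (c * |lam|) ^ (-(1 / (k : ℝ))) := by
  have hφ₀ : ContinuousOn (φ 0) (Icc u v) := fun x hx =>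
    (hφ 0 (by omega) x hx).continuousAt.continuousWithinAt
  induction k, hk using Nat.le_induction generalizing c u v with
  | base =>
    have hsign := forall_le_or_forall_le_neg_of_le_abs_deriv (convex_Icc u v) hc
      (hφ 1 (by norm_num)) hlow
    have := van_der_corput_step one_ne_zero (C := 3) (by norm_num) huv hc hlam hφ₀
      (hφ 1 (by norm_num)) hlow fun w z hw hwz hz c' hc' hlow' => by
        have hsub : Icc w z ⊆ Icc u v := Icc_subset_Icc hw hz
        rw [Nat.cast_one, div_one, Real.rpow_neg_one]
        exact van_der_corput_first_deriv hwz hc' hlam (fun x hx => hφ 0 (by norm_num) x (hsub hx))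
          (fun x hx => hφ 1 (by norm_num) x (hsub hx))
          (hsign.imp (fun h x hx => hc.le.trans (h x (hsub hx)))
            (fun h x hx => (h x (hsub hx)).trans (neg_nonpos.2 hc.le))) hlow'
    convert this using 2 <;> norm_num
  | succ k hk ih =>
    have := van_der_corput_step (by omega : k ≠ 0) (C := 5 * 2 ^ (k - 1) - 2)
      (by linarith [one_le_pow₀ (M₀ := ℝ) (n := k - 1) one_le_two]) huv hc hlam hφ₀
      (hφ k (by omega)) hlow fun w z hw hwz hz c' hc' hlow' =>
        ih hwz hc' (fun j hj x hx => hφ j (by omega) x (Icc_subset_Icc hw hz hx)) hlow'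
          (hφ₀.mono (Icc_subset_Icc hw hz))
    convert this using 2
    · rw [show k + 1 - 1 = (k - 1) + 1 by omega, pow_succ]
      ring
    · push_cast
      ring

theorem van_der_corput_of_contDiffOn {s : Set ℝ} {k : ℕ} (hs : IsOpen s) (hk : 2 ≤ k)
    (hψ : ContDiffOn ℝ k ψ s) (hder : ∀ x ∈ s, c ≤ |iteratedDerivWithin k ψ s x|) (huv : u ≤ v)
    (hsub : Icc u v ⊆ s) (hc : 0 < c) (hlam : lam ≠ 0) :
    ‖∫ x in u..v, exp (I * lam * ψ x)‖ ≤
      (5 * 2 ^ (k - 1) - 2) * (c * |lam|) ^ (-(1 / (k : ℝ))) := by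
  simpa only [iteratedDerivWithin_zero] using
    van_der_corput_Icc (φ := fun j => iteratedDerivWithin j ψ s) hk huv hc hlam
      (fun j hj x hx => hasDerivAt_iteratedDerivWithin hs hψ hj (hsub hx))
      fun x hx => hder x (hsub hx)

end VanDerCorput

section Amplitude

variable {E : Type*} [NormedAddCommGroup E] [NormedSpace ℝ E] {h h' : ℝ → ℝ} {a b u v B : ℝ}

theorem norm_integral_smul_le_of_norm_primitive_le [CompleteSpace E] {f : ℝ → E} (huv : u ≤ v)
    (hf : ContinuousOn f (Icc u v)) (hh : ContinuousOn h (Icc u v))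
    (hh' : ∀ x ∈ Ioo u v, HasDerivAt h (h' x) x) (hh'int : IntervalIntegrable h' volume u v)
    (hB : ∀ x ∈ Icc u v, ‖∫ t in u..x, f t‖ ≤ B) :
    ‖∫ x in u..v, h x • f x‖ ≤ B * (|h v| + ∫ x in u..v, |h' x|) := by
  have hF : ContinuousOn (fun x => ∫ t in u..x, f t) (Icc u v) := by
    have := continuousOn_primitive_interval (μ := volume) (a := u) (b := v) (f := f)
    rw [uIcc_of_le huv] at this
    exact this hf.integrableOn_Icc
  have hFf : ∀ x ∈ Ioo u v, HasDerivAt (fun x => ∫ t in u..x, f t) (f x) x := fun x hx =>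
    integral_hasDerivAt_right ((hf.mono (Icc_subset_Icc le_rfl hx.2.le)).intervalIntegrable_of_Icc
      hx.1.le) ((hf.mono Ioo_subset_Icc_self).stronglyMeasurableAtFilter isOpen_Ioo x hx)
      ((hf.mono Ioo_subset_Icc_self).continuousAt (isOpen_Ioo.mem_nhds hx))
  have := norm_integral_smul_deriv_le huv hh hF hh' hFf hh'int (hf.intervalIntegrable_of_Icc huv) hB
  rw [integral_same, norm_zero, mul_zero, add_zero] at this
  calc _ ≤ |h v| * B + B * ∫ x in u..v, |h' x| := by
        refine this.trans ?_
        gcongr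
        exact hB v (right_mem_Icc.2 huv)
    _ = B * (|h v| + ∫ x in u..v, |h' x|) := by ring

theorem abs_add_integral_abs_deriv_le (hu : a < u) (huv : u ≤ v)
    (hvb : v ≤ b) (hh : ContinuousOn h (Ioc a b)) (hh' : ∀ x ∈ Ioo a b, HasDerivAt h (h' x) x)
    (hint : IntegrableOn h' (Ioo a b)) :
    |h v| + ∫ x in u..v, |h' x| ≤ |h b| + ∫ x in Ioo a b, |h' x| := by
  have hint' : ∀ w z, a < w → w ≤ z → z ≤ b → IntervalIntegrable h' volume w z :=
    fun w z hw hwz hz => (intervalIntegrable_iff_integrableOn_Ioo_of_le hwz).2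
      (hint.mono_set (Ioo_subset_Ioo hw.le hz))
  have hav : a < v := hu.trans_le huv
  have hftc : ∫ x in v..b, h' x = h b - h v :=
    integral_eq_sub_of_hasDerivAt_of_le hvb (hh.mono (Icc_subset_Ioc hav le_rfl))
      (fun x hx => hh' x ⟨hav.trans hx.1, hx.2⟩) (hint' v b hav hvb le_rfl)
  have hv_le : |h v| ≤ |h b| + ∫ x in v..b, |h' x| := by
    have := abs_integral_le_integral_abs (f := h') (μ := volume) hvb
    rw [hftc] at this
    linarith [abs_sub_abs_le_abs_sub (h v) (h b), abs_sub_comm (h v) (h b)]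
  have hsplit : (∫ x in u..v, |h' x|) + ∫ x in v..b, |h' x| = ∫ x in u..b, |h' x| :=
    integral_add_adjacent_intervals (hint' u v hu huv hvb).abs (hint' v b hav hvb le_rfl).abs
  have hub : ∫ x in u..b, |h' x| ≤ ∫ x in Ioo a b, |h' x| := by
    rw [intervalIntegral.integral_of_le (huv.trans hvb), integral_Ioc_eq_integral_Ioo]
    exact setIntegral_mono_set hint.abs (Eventually.of_forall fun x => abs_nonneg _)
      (Ioo_subset_Ioo hu.le le_rfl).eventuallyLE
  linarith

theorem norm_integral_Ioo_le_of_forall_norm_intervalIntegral_le {f : ℝ → E} {C : ℝ} (hC : 0 ≤ C)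
    (hbound : ∀ u v, a < u → u ≤ v → v < b → ‖∫ x in u..v, f x‖ ≤ C) :
    ‖∫ x in Ioo a b, f x‖ ≤ C := by
  by_cases hf : IntegrableOn f (Ioo a b)
  swap
  · simpa [integral_undef hf] using hC
  rcases le_or_gt b a with hba | hab
  · simpa [Ioo_eq_empty_of_le hba] using hC
  have hcover := aecover_Ioo_of_Ioo (μ := volume) (l := 𝓝[>] a ×ˢ 𝓝[<] b)
    (tendsto_fst.mono_right nhdsWithin_le_nhds) (tendsto_snd.mono_right nhdsWithin_le_nhds)
  refine le_of_tendsto (hcover.integral_tendsto_of_countably_generated hf).norm ?_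
  filter_upwards [prod_mem_prod (Ioo_mem_nhdsGT hab) (Ioo_mem_nhdsLT hab)] with ⟨u, v⟩ ⟨hu, hv⟩
  rw [Measure.restrict_restrict measurableSet_Ioo,
    inter_eq_left.2 (Ioo_subset_Ioo hu.1.le hv.2.le)]
  rcases le_or_gt u v with huv | hvu
  · rw [← integral_Ioc_eq_integral_Ioo, ← intervalIntegral.integral_of_le huv]
    exact hbound u v hu.1 huv hv.2
  · simpa [Ioo_eq_empty_of_le hvu.le] using hC

theorem norm_integral_Ioo_smul_le_of_norm_primitive_le [CompleteSpace E] {f : ℝ → E} (hB : 0 ≤ B)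
    (hf : ContinuousOn f (Ioo a b)) (hh : ContinuousOn h (Ioc a b))
    (hh' : ∀ x ∈ Ioo a b, HasDerivAt h (h' x) x) (hint : IntegrableOn h' (Ioo a b))
    (hfB : ∀ u v, a < u → u ≤ v → v < b → ‖∫ x in u..v, f x‖ ≤ B) :
    ‖∫ x in Ioo a b, h x • f x‖ ≤ B * (|h b| + ∫ x in Ioo a b, |h' x|) := by
  refine norm_integral_Ioo_le_of_forall_norm_intervalIntegral_le
    (mul_nonneg hB (add_nonneg (abs_nonneg _) (integral_nonneg fun x => abs_nonneg _)))
    fun u v hu huv hv => ?_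
  have hsub : Icc u v ⊆ Ioo a b := Icc_subset_Ioo hu hv
  calc _ ≤ B * (|h v| + ∫ x in u..v, |h' x|) :=
        norm_integral_smul_le_of_norm_primitive_le huv (hf.mono hsub)
          (hh.mono (hsub.trans Ioo_subset_Ioc_self))
          (fun x hx => hh' x (hsub (Ioo_subset_Icc_self hx)))
          ((intervalIntegrable_iff_integrableOn_Ioo_of_le huv).2
            (hint.mono_set (Ioo_subset_Ioo hu.le hv.le)))
          fun x hx => hfB u x hu hx.1 (hx.2.trans_lt hv)
    _ ≤ B * (|h b| + ∫ x in Ioo a b, |h' x|) :=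
        mul_le_mul_of_nonneg_left (abs_add_integral_abs_deriv_le hu huv hv.le hh hh' hint) hB

end Amplitude

theorem van_der_corput_amplitude_general (k : ℕ) (hk : 2 ≤ k) (c : ℝ) (hc : 0 < c)
    (a b : ℝ) (ψ : ℝ → ℝ)
    (hψ : ContDiffOn ℝ k ψ (Set.Ioo a b))
    (hder : ∀ x ∈ Set.Ioo a b, c ≤ |iteratedDerivWithin k ψ (Set.Ioo a b) x|)
    (h h' : ℝ → ℝ)
    (hh : ∀ x ∈ Set.Ioo a b, HasDerivAt h (h' x) x)
    (hcont : ContinuousOn h (Set.Ioc a b))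
    (hint : MeasureTheory.IntegrableOn h' (Set.Ioo a b))
    (lam : ℝ) (hlam : lam ≠ 0) :
    ‖∫ x in Set.Ioo a b, Complex.exp (Complex.I * lam * ψ x) * h x‖
      ≤ (5 * 2 ^ (k - 1) - 2 : ℝ) * c ^ (-(1 / (k : ℝ)))
          * (|h b| + ∫ x in Set.Ioo a b, |h' x|) * |lam| ^ (-(1 / (k : ℝ))) := by
  set B := (5 * 2 ^ (k - 1) - 2 : ℝ) * (c * |lam|) ^ (-(1 / (k : ℝ)))
  have hB : 0 ≤ B := mul_nonneg (by linarith [one_le_pow₀ (M₀ := ℝ) (n := k - 1) one_le_two])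
    (by positivity)
  have hE : ContinuousOn (fun x => exp (I * lam * ψ x)) (Ioo a b) := by
    have := hψ.continuousOn
    fun_prop
  calc ‖∫ x in Ioo a b, exp (I * lam * ψ x) * h x‖
      = ‖∫ x in Ioo a b, h x • exp (I * lam * ψ x)‖ := by simp_rw [real_smul, mul_comm]
    _ ≤ B * (|h b| + ∫ x in Ioo a b, |h' x|) :=
        norm_integral_Ioo_smul_le_of_norm_primitive_le hB hE hcont hh hint
          fun u v hu huv hv => van_der_corput_of_contDiffOn isOpen_Ioo hk hψ hder huv
            (Icc_subset_Ioo hu hv) hc hlam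
    _ = _ := by
        simp only [B, Real.mul_rpow hc.le (abs_nonneg lam)]
        ring

/-- Van der Corput lemma with an amplitude: if `ψ` is real-valued, `C^k` on `(a,b)` with
`k ≥ 2` and `|ψ^{(k)}| ≥ c > 0` on `(a,b)`, and `h` is `C¹` on `(a,b)`, continuous on `(a,b]`,
with `h'` integrable on `(a,b)`, then for every real `λ ≠ 0`,
`|∫_a^b e^{iλψ(x)} h(x) dx| ≤ (5·2^{k-1} - 2) c^{-1/k} (|h(b)| + ∫_a^b |h'|) |λ|^{-1/k}`. -/
theorem van_der_corput_amplitude (k : ℕ) (hk : 2 ≤ k) (c : ℝ) (hc : 0 < c)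
    (a b : ℝ) (hab : a < b) (ψ : ℝ → ℝ)
    (hψ : ContDiffOn ℝ k ψ (Set.Ioo a b))
    (hder : ∀ x ∈ Set.Ioo a b, c ≤ |iteratedDerivWithin k ψ (Set.Ioo a b) x|)
    (h h' : ℝ → ℝ)
    (hh : ∀ x ∈ Set.Ioo a b, HasDerivAt h (h' x) x)
    (hh' : ContinuousOn h' (Set.Ioo a b))
    (hcont : ContinuousOn h (Set.Ioc a b))
    (hint : MeasureTheory.IntegrableOn h' (Set.Ioo a b))
    (lam : ℝ) (hlam : lam ≠ 0) :
    ‖∫ x in Set.Ioo a b, Complex.exp (Complex.I * lam * ψ x) * h x‖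
      ≤ (5 * 2 ^ (k - 1) - 2 : ℝ) * c ^ (-(1 / (k : ℝ)))
          * (|h b| + ∫ x in Set.Ioo a b, |h' x|) * |lam| ^ (-(1 / (k : ℝ))) :=
  van_der_corput_amplitude_general k hk c hc a b ψ hψ hder h h' hh hcont hint lam hlam
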